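/- For m ≥ 1, the generalized Narayana triangle entry satisfies N_{m,1}(z) = ∑_{j=0}^{⌊(m−1)/2⌋} (−1)^j C(m−1−j, j) N_j(z^2) (2(z+1))^{m−1−2j}. -/

import Mathlib

/-!
Rows of the triangle are vectors `ℕ → R` indexed by the column, and row `n + 1` is row `n` under
the tridiagonal operator `J_x` (sub-diagonal `1`, diagonal `x + 1`, super-diagonal `x`).
Expanding `J_x²` shows that on odd columns `J_x² = 2 (x + 1) J_x + (J_{x²} - 2 (x² + 1))`,
so the odd parts of the rows satisfy a two-term recurrence with operator coefficient
`T = J_{x²} - 2 (x² + 1)`, solved by the Fibonacci polynomials `∑ C(n - j, j) a^(n - 2j) T^j`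
with `a = 2 (x + 1)`.
Conjugating by the sign operator `(-1)^k` turns `T` into `-J_{x²}`, so the `(0, 0)` entry of `T^j`
is `(-1)^j N_{j,0}(x²)`. Finally column `0` of the triangle is the Narayana polynomial, because
the coefficient of `z^i` in `N_{m,k}` is `(k + 1)/(m + 1) C(m + 1, i) C(m + 1, i + k + 1)`.
-/

open Polynomial Finset

/-- The `n`-th Narayana polynomial. -/
noncomputable def nar (n : ℕ) : Polynomial ℚ :=
  ∑ i ∈ Finset.range (n + 1),
    Polynomial.C ((1 : ℚ) / ((n : ℚ) + 1) * ((n + 1).choose i) * ((n + 1).choose (i + 1)))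
      * Polynomial.X ^ i

theorem Nat.choose_succ_sub_succ (n j : ℕ) :
    (n + 1 - j).choose (j + 1) = (n - j).choose (j + 1) + (n - j).choose j := by
  rcases le_or_gt j n with hj | hj
  · rw [Nat.sub_add_comm hj, Nat.choose_succ_succ', add_comm]
  · obtain ⟨i, rfl⟩ : ∃ i, j = i + 1 := ⟨j - 1, by omega⟩
    simp [Nat.sub_eq_zero_of_le hj.le, show n + 1 - (i + 1) = 0 by omega]

section Fibonacci

variable {R M : Type*} [CommSemiring R] [AddCommMonoid M] [Module R M]

theorem choose_mul_pow_add_two_succ (a : R) (n j : ℕ) :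
    ((n + 2 - (j + 1)).choose (j + 1) * a ^ (n + 2 - 2 * (j + 1)) : R) =
      a * ((n + 1 - (j + 1)).choose (j + 1) * a ^ (n + 1 - 2 * (j + 1))) +
        (n - j).choose j * a ^ (n - 2 * j) := by
  rw [show n + 2 - (j + 1) = n + 1 - j by omega, show n + 2 - 2 * (j + 1) = n - 2 * j by omega,
    show n + 1 - (j + 1) = n - j by omega, Nat.choose_succ_sub_succ, Nat.cast_add]
  rcases le_or_gt (2 * j + 1) n with hj | hj
  · rw [show n - 2 * j = n + 1 - 2 * (j + 1) + 1 by omega, pow_succ]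
    ring
  · simp [Nat.choose_eq_zero_of_lt (show n - j < j + 1 by omega)]

theorem eq_sum_range_choose_smul_of_two_step (a : R) (L : Module.End R M) (v : ℕ → M)
    (h0 : v 0 = 0) (h : ∀ n, v (n + 2) = a • v (n + 1) + L (v n)) (n : ℕ) :
    v (n + 1) = ∑ j ∈ range (n + 1), ((n - j).choose j * a ^ (n - 2 * j)) • (L ^ j) (v 1) := by
  induction n using Nat.twoStepInduction with
  | zero => simp
  | one => simp [h 0, h0, sum_range_succ]
  | more n ihn ihn1 =>
    rw [h, ihn1, ihn, smul_sum, map_sum, sum_range_succ' _ (n + 1)]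
    conv_rhs => rw [sum_range_succ', sum_range_succ]
    simp only [choose_mul_pow_add_two_succ, add_smul, sum_add_distrib, smul_smul, pow_succ',
      Module.End.mul_apply, map_smul]
    simp only [Nat.reduceSubDiff, tsub_zero, Nat.choose_zero_right, Nat.cast_one, mul_zero,
      pow_succ, one_mul, pow_zero, Module.End.one_apply, le_add_iff_nonneg_right, zero_le,
      Nat.sub_eq_zero_of_le, Nat.choose_zero_succ, Nat.cast_zero, zero_mul, zero_smul, add_zero]
    module

theorem eq_sum_choose_smul_of_two_step (a : R) (L : Module.End R M) (v : ℕ → M)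
    (h0 : v 0 = 0) (h : ∀ n, v (n + 2) = a • v (n + 1) + L (v n)) (n : ℕ) :
    v (n + 1) =
      ∑ j ∈ range (n / 2 + 1), ((n - j).choose j * a ^ (n - 2 * j)) • (L ^ j) (v 1) := by
  rw [eq_sum_range_choose_smul_of_two_step a L v h0 h]
  refine (sum_subset (range_subset_range.2 (by omega)) fun j hj hj' => ?_).symm
  simp only [mem_range] at hj hj'
  simp [Nat.choose_eq_zero_of_lt (show n - j < j by omega)]

end Fibonacci

section CastChoose

variable {K : Type*} [Field K] [CharZero K]

theorem Nat.cast_choose_eq_choose_succ_mul_div (n j : ℕ) :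
    (n.choose j : K) = (n + 1).choose (j + 1) * (j + 1) / (n + 1) := by
  rw [eq_div_iff (Nat.cast_add_one_ne_zero n)]
  exact_mod_cast (mul_comm _ _).trans (Nat.add_one_mul_choose_eq n j)

theorem Nat.cast_choose_succ_eq_choose_succ_mul_div (n j : ℕ) :
    (n.choose (j + 1) : K) = (n + 1).choose (j + 1) * (n - j) / (n + 1) := by
  have := Nat.cast_choose_eq_choose_succ_mul_div (K := K) n j
  rw [Nat.choose_succ_succ', Nat.cast_add] at this ⊢
  field_simp at this ⊢
  linear_combination -this

end CastChoose

namespace NarayanaTriangle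

variable {R S : Type*} [CommRing R] [CommRing S]

def jacobi (y : R) : Module.End R (ℕ → R) where
  toFun v
    | 0 => (y + 1) * v 0 + y * v 1
    | k + 1 => v k + (y + 1) * v (k + 1) + y * v (k + 2)
  map_add' v w := by
    ext (_ | k) <;> simp only [Pi.add_apply] <;> ring
  map_smul' c v := by
    ext (_ | k) <;> simp only [Pi.smul_apply, smul_eq_mul, RingHom.id_apply] <;> ring

@[simp]
theorem jacobi_apply_zero (y : R) (v : ℕ → R) : jacobi y v 0 = (y + 1) * v 0 + y * v 1 := rfl

@[simp]
theorem jacobi_apply_succ (y : R) (v : ℕ → R) (k : ℕ) :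
    jacobi y v (k + 1) = v k + (y + 1) * v (k + 1) + y * v (k + 2) := rfl

def reflJacobi (y : R) : Module.End R (ℕ → R) := jacobi y - (2 * (y + 1)) • 1

def row (x : R) (n : ℕ) : ℕ → R := (jacobi x ^ n) (Pi.single 0 1)

theorem row_zero (x : R) : row x 0 = Pi.single 0 1 := rfl

theorem row_succ (x : R) (n : ℕ) : row x (n + 1) = jacobi x (row x n) := by
  rw [row, pow_succ', Module.End.mul_apply, row]

theorem eq_row {N : ℕ → ℕ → R} {x : R}
    (h00 : N 0 0 = 1) (htop : ∀ n k, n < k → N n k = 0)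
    (h0 : ∀ n, N (n + 1) 0 = (x + 1) * N n 0 + x * N n 1)
    (h : ∀ n k, N (n + 1) (k + 1) = N n k + (x + 1) * N n (k + 1) + x * N n (k + 2))
    (n k : ℕ) : N n k = row x n k := by
  induction n generalizing k with
  | zero => cases k with
    | zero => simp [row_zero, h00]
    | succ k => simp [row_zero, htop 0 (k + 1) k.succ_pos]
  | succ n ih => cases k with
    | zero => simp [row_succ, h0, ih]
    | succ k => simp [row_succ, h, ih]

theorem map_row (f : R →+* S) (x : R) (n k : ℕ) : f (row x n k) = row (f x) n k := by
  induction n generalizing k with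
  | zero => cases k <;> simp [row_zero]
  | succ n ih => cases k <;> simp [row_succ, ih]

theorem row_odd_add_two (x : R) (n : ℕ) :
    (fun k ↦ row x (n + 2) (2 * k + 1)) =
      (2 * (x + 1)) • (fun k ↦ row x (n + 1) (2 * k + 1)) +
        reflJacobi (x ^ 2) (fun k ↦ row x n (2 * k + 1)) := by
  ext (_ | k)
  · simp only [mul_zero, zero_add, row_succ, jacobi_apply_succ, jacobi_apply_zero, reflJacobi,
      LinearMap.sub_apply, LinearMap.smul_apply, Module.End.one_apply, Pi.add_apply,
      Pi.smul_apply, Pi.sub_apply, smul_eq_mul]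
    ring
  · simp only [row_succ, show 2 * (k + 1) + 1 = 2 * k + 1 + 1 + 1 by ring, jacobi_apply_succ,
      reflJacobi, LinearMap.sub_apply, LinearMap.smul_apply, Module.End.one_apply, Pi.add_apply,
      Pi.smul_apply, Pi.sub_apply, smul_eq_mul]
    ring_nf

theorem reflJacobi_pow_single_apply_zero (y : R) (j : ℕ) :
    (reflJacobi y ^ j) (Pi.single 0 1) 0 = (-1) ^ j * row y j 0 := by
  let σ : Module.End R (ℕ → R) := LinearMap.mulLeft R (fun k ↦ (-1) ^ k)
  have hσ : SemiconjBy σ (jacobi y) ((-1 : R) • reflJacobi y) := by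
    ext v (_ | k) <;>
      simp only [σ, reflJacobi, Module.End.mul_apply, LinearMap.mulLeft_apply, Pi.mul_apply,
        jacobi_apply_zero, jacobi_apply_succ, LinearMap.smul_apply, LinearMap.sub_apply,
        Module.End.one_apply, Pi.smul_apply, Pi.sub_apply, smul_eq_mul, pow_succ] <;>
      ring
  have hσδ : σ (Pi.single 0 1) = Pi.single 0 1 := by
    ext (_ | k) <;> simp [σ]
  have := congr($(hσ.pow_right j) (Pi.single 0 1) 0)
  simp only [Module.End.mul_apply, _root_.smul_pow, LinearMap.smul_apply, hσδ] at this
  simp only [σ, LinearMap.mulLeft_apply, Pi.mul_apply, Pi.smul_apply, smul_eq_mul, pow_zero,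
    one_mul] at this
  rw [row, this, ← mul_assoc, ← mul_pow, neg_one_mul, neg_neg, one_pow, one_mul]

theorem row_add_one_one_eq_sum (x : R) (n : ℕ) :
    row x (n + 1) 1 = ∑ j ∈ range (n / 2 + 1),
      (-1) ^ j * ((n - j).choose j : R) * row (x ^ 2) j 0 * (2 * (x + 1)) ^ (n - 2 * j) := by
  have hodd := eq_sum_choose_smul_of_two_step (2 * (x + 1)) _ (fun m k ↦ row x m (2 * k + 1))
    (by ext k; simp [row_zero]) (row_odd_add_two x) n
  have hδ : (fun k ↦ row x 1 (2 * k + 1)) = Pi.single 0 1 := by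
    ext (_ | k) <;> simp [row_succ, row_zero]
  have := congr_fun hodd 0
  simp only [hδ, Finset.sum_apply, Pi.smul_apply, smul_eq_mul,
    reflJacobi_pow_single_apply_zero] at this
  rw [this]
  exact sum_congr rfl fun j _ ↦ by ring

/-- Column `k` of the triangle has coefficients `narayanaCoeff m (k + 1)` (`coeff_row_X`); the
shift lets `narayanaCoeff m 0 = 0` serve as the missing column `-1` in the recurrence. -/
def narayanaCoeff (m k i : ℕ) : ℚ := k / (m + 1) * (m + 1).choose i * (m + 1).choose (i + k)

@[simp]
theorem narayanaCoeff_zero_column (m i : ℕ) : narayanaCoeff m 0 i = 0 := by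
  simp [narayanaCoeff]

theorem narayanaCoeff_succ_zero (m k : ℕ) :
    narayanaCoeff (m + 1) (k + 1) 0 = narayanaCoeff m k 0 + narayanaCoeff m (k + 1) 0 := by
  simp only [narayanaCoeff, Nat.choose_zero_right, zero_add, Nat.cast_one, mul_one]
  rw [Nat.cast_choose_eq_choose_succ_mul_div (m + 1) k,
    Nat.cast_choose_succ_eq_choose_succ_mul_div (m + 1) k]
  push_cast
  field_simp
  ring

theorem narayanaCoeff_succ_succ (m k i : ℕ) :
    narayanaCoeff (m + 1) (k + 1) (i + 1) = narayanaCoeff m k (i + 1) +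
      narayanaCoeff m (k + 1) i + narayanaCoeff m (k + 1) (i + 1) + narayanaCoeff m (k + 2) i := by
  simp only [narayanaCoeff, show i + 1 + k = i + k + 1 by ring,
    show i + (k + 1) = i + k + 1 by ring, show i + 1 + (k + 1) = i + k + 1 + 1 by ring,
    show i + (k + 2) = i + k + 1 + 1 by ring]
  rw [Nat.cast_choose_eq_choose_succ_mul_div (m + 1) i,
    Nat.cast_choose_succ_eq_choose_succ_mul_div (m + 1) i,
    Nat.cast_choose_eq_choose_succ_mul_div (m + 1) (i + k + 1),
    Nat.cast_choose_succ_eq_choose_succ_mul_div (m + 1) (i + k + 1)]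
  push_cast
  field_simp
  ring

theorem coeff_row_X (m k i : ℕ) : (row (X : ℚ[X]) m k).coeff i = narayanaCoeff m (k + 1) i := by
  induction m generalizing k i with
  | zero =>
    rcases k with _ | k <;> rcases i with _ | _ | i <;>
      simp [row_zero, narayanaCoeff, coeff_one, Nat.choose_eq_zero_iff]
  | succ m ih =>
    rcases k with _ | k <;> rcases i with _ | i
    · simp [row_succ, mul_coeff_zero, ih, narayanaCoeff_succ_zero]
    · simp [row_succ, add_mul, coeff_X_mul, ih, narayanaCoeff_succ_succ]
    · simp [row_succ, mul_coeff_zero, ih, narayanaCoeff_succ_zero]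
    · simp [row_succ, add_mul, coeff_X_mul, ih, narayanaCoeff_succ_succ, add_assoc]

theorem row_X_zero_eq_nar (m : ℕ) : row (X : ℚ[X]) m 0 = nar m := by
  ext i
  simp only [coeff_row_X, nar, finsetSum_coeff, coeff_C_mul_X_pow, sum_ite_eq, mem_range]
  split_ifs with hi
  · simp [narayanaCoeff]
  · simp [narayanaCoeff, Nat.choose_eq_zero_of_lt (show m + 1 < i + 1 by omega)]

theorem row_X_sq_zero_eq_nar_comp (m : ℕ) :
    row ((X : ℚ[X]) ^ 2) m 0 = (nar m).comp (X ^ 2) := by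
  rw [← row_X_zero_eq_nar, ← coe_compRingHom_apply, map_row, coe_compRingHom_apply, X_comp]

end NarayanaTriangle

/-- Remark: `N_{m,1}(z) = ∑_j (-1)^j C(m-1-j,j) N_j(z^2) (2(z+1))^{m-1-2j}` for `m ≥ 1`. -/
theorem stmt14 (N : ℕ → ℕ → Polynomial ℚ)
    (h00 : N 0 0 = 1) (htop : ∀ n k, n < k → N n k = 0)
    (h0 : ∀ n, N (n + 1) 0 = (Polynomial.X + 1) * N n 0 + Polynomial.X * N n 1)
    (h : ∀ n k, N (n + 1) (k + 1)
        = N n k + (Polynomial.X + 1) * N n (k + 1) + Polynomial.X * N n (k + 2))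
    (m : ℕ) (hm : 1 ≤ m) :
    N m 1 = ∑ j ∈ Finset.range ((m - 1) / 2 + 1),
        (-1 : Polynomial ℚ) ^ j * Polynomial.C (((m - 1 - j).choose j : ℚ))
          * (nar j).comp (Polynomial.X ^ 2)
          * (2 * (Polynomial.X + 1)) ^ (m - 1 - 2 * j) := by
  obtain ⟨n, rfl⟩ : ∃ n, m = n + 1 := ⟨m - 1, by omega⟩
  rw [NarayanaTriangle.eq_row h00 htop h0 h, NarayanaTriangle.row_add_one_one_eq_sum,
    Nat.add_sub_cancel]
  refine sum_congr rfl fun j _ ↦ ?_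
  rw [NarayanaTriangle.row_X_sq_zero_eq_nar_comp, map_natCast]
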